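/- Let b be a positive integer and n ≥ 3. Let B be the 2×n integer matrix whose m-th column is (r_b(m-1), 1)^T, and let C be the (n-2)×n integer matrix whose rows are: for 1 ≤ m ≤ n-3, the row b·e_m − e_{m+1} − b·e_{m+2} + e_{m+3}, and the last row b·e_{n-2} − (b+1)·e_{n-1} + e_n (where e_1,…,e_n is the standard basis of ℤ^n). Then the rows of C generate the kernel of the ℤ-linear map ℤ^n → ℤ^2 given by B; that is, the ℤ-span of the rows of C equals {u ∈ ℤ^n : B·u = 0}. -/

import Mathlib

/-- The ℓ-th repunit in base `b`: `r_b(ℓ) = ∑_{j=0}^{ℓ-1} b^j`, with `r_b(0) = 0`. -/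
def rep (b ℓ : ℕ) : ℕ := ∑ j ∈ Finset.range ℓ, b ^ j

/-- The `m`-th (1-indexed) standard basis vector of `ℤ^n`. -/
def eZ (n m : ℕ) : Fin n → ℤ := fun j => if (j : ℕ) + 1 = m then 1 else 0

/-- The 2×n matrix `B` whose `m`-th (1-indexed) column is `(r_b(m-1), 1)ᵀ`. -/
def Bmat (b n : ℕ) : Matrix (Fin 2) (Fin n) ℤ :=
  Matrix.of fun i j => if i = 0 then (rep b (j : ℕ) : ℤ) else 1

/-- The rows of the `(n-2)×n` matrix `C`: for `1 ≤ m ≤ n-3` the row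
`b·e_m − e_{m+1} − b·e_{m+2} + e_{m+3}`, and the last row `b·e_{n-2} − (b+1)·e_{n-1} + e_n`. -/
def Crows (b n : ℕ) : Fin (n - 2) → (Fin n → ℤ) := fun r =>
  if (r : ℕ) + 1 ≤ n - 3 then
    (b : ℤ) • eZ n ((r : ℕ) + 1) - eZ n ((r : ℕ) + 2) - (b : ℤ) • eZ n ((r : ℕ) + 3) +
      eZ n ((r : ℕ) + 4)
  else
    (b : ℤ) • eZ n (n - 2) - ((b : ℤ) + 1) • eZ n (n - 1) + eZ n n

/-! The repunits satisfy `r_b(ℓ + 2) = (b + 1) r_b(ℓ + 1) − b r_b(ℓ)` with `r_b(0) = 0`,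
`r_b(1) = 1`, so every vector `P_t = b e_{t+1} − (b+1) e_{t+2} + e_{t+3}` (`recurrenceRow b n t`)
lies in the kernel of `B`. The rows of `C` are `P_t + P_{t+1}` and, last, `P_{n-3}`; this change
of generators is unitriangular, so the rows of `C` and the `P_t` span the same lattice.
Conversely, subtracting a multiple of `P_t` clears the last nonzero coordinate of a kernel vector,
until the vector is supported on the first two coordinates, where `B` restricts to the invertible
`[[0, 1], [1, 1]]`. -/

open Matrix

lemma rep_succ (b ℓ : ℕ) : rep b (ℓ + 1) = b * rep b ℓ + 1 := by
  rw [rep, rep, Finset.sum_range_succ', Finset.mul_sum, pow_zero]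
  simp only [pow_succ, mul_comm b]

lemma eZ_succ_eq_single {n k : ℕ} (hk : k < n) : eZ n (k + 1) = Pi.single ⟨k, hk⟩ 1 := by
  ext j
  simp [eZ, Pi.single_apply, Fin.ext_iff]

def recurrenceRow (b n t : ℕ) : Fin n → ℤ :=
  (b : ℤ) • eZ n (t + 1) - ((b : ℤ) + 1) • eZ n (t + 2) + eZ n (t + 3)

section

variable {b n : ℕ}

lemma recurrenceRow_apply_of_lt {t : ℕ} {j : Fin n} (h : t + 2 < j) :
    recurrenceRow b n t j = 0 := by
  have : (j : ℕ) ≠ t ∧ (j : ℕ) ≠ t + 1 ∧ (j : ℕ) ≠ t + 2 := by omega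
  simp [recurrenceRow, eZ, this]

lemma recurrenceRow_apply_self {t : ℕ} {j : Fin n} (h : (j : ℕ) = t + 2) :
    recurrenceRow b n t j = 1 := by
  simp [recurrenceRow, eZ, h]

lemma Bmat_mulVec_recurrenceRow {t : ℕ} (ht : t + 3 ≤ n) :
    Bmat b n *ᵥ recurrenceRow b n t = 0 := by
  rw [recurrenceRow, eZ_succ_eq_single (by omega : t < n),
    eZ_succ_eq_single (by omega : t + 1 < n), eZ_succ_eq_single (by omega : t + 2 < n)]
  simp only [mulVec_add, mulVec_sub, mulVec_smul, mulVec_single]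
  ext i
  fin_cases i <;> simp [Bmat, col, rep_succ]; ring

lemma Crows_eq_add {r : Fin (n - 2)} (h : (r : ℕ) + 1 ≤ n - 3) :
    Crows b n r = recurrenceRow b n r + recurrenceRow b n (r + 1) := by
  rw [Crows, if_pos h, recurrenceRow, recurrenceRow]
  module

lemma Crows_eq_last {r : Fin (n - 2)} (h : ¬(r : ℕ) + 1 ≤ n - 3) :
    Crows b n r = recurrenceRow b n (n - 3) := by
  have := r.isLt
  rw [Crows, if_neg h, recurrenceRow, show n - 3 + 1 = n - 2 by omega,
    show n - 3 + 2 = n - 1 by omega, show n - 3 + 3 = n by omega]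

lemma Bmat_mulVec_Crows (r : Fin (n - 2)) : Bmat b n *ᵥ Crows b n r = 0 := by
  have := r.isLt
  by_cases h : (r : ℕ) + 1 ≤ n - 3
  · rw [Crows_eq_add h, mulVec_add, Bmat_mulVec_recurrenceRow (by omega),
      Bmat_mulVec_recurrenceRow (by omega), add_zero]
  · rw [Crows_eq_last h, Bmat_mulVec_recurrenceRow (by omega)]

lemma recurrenceRow_mem_span_Crows {t : ℕ} (ht : t + 3 ≤ n) :
    recurrenceRow b n t ∈ Submodule.span ℤ (Set.range (Crows b n)) := by
  obtain ⟨k, hk⟩ : ∃ k, t + k = n - 3 := ⟨n - 3 - t, by omega⟩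
  induction k generalizing t with
  | zero =>
    obtain rfl : t = n - 3 := hk
    rw [← Crows_eq_last (r := ⟨n - 3, by omega⟩) (by simp)]
    exact Submodule.subset_span ⟨_, rfl⟩
  | succ k ih =>
    have hrow := Crows_eq_add (b := b) (r := (⟨t, by omega⟩ : Fin (n - 2))) (by simp; omega)
    rw [eq_sub_of_add_eq hrow.symm]
    exact sub_mem (Submodule.subset_span ⟨_, rfl⟩) (ih (t := t + 1) (by omega) (by omega))

lemma eq_zero_of_Bmat_mulVec_eq_zero {v : Fin n → ℤ} (hv : Bmat b n *ᵥ v = 0)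
    (hsupp : ∀ j : Fin n, 2 ≤ (j : ℕ) → v j = 0) : v = 0 := by
  have h0 : ∑ j : Fin n, (rep b (j : ℕ) : ℤ) * v j = 0 := by
    simpa [mulVec, dotProduct, Bmat] using congrFun hv 0
  have h1 : ∑ j, v j = 0 := by
    simpa [mulVec, dotProduct, Bmat] using congrFun hv 1
  have rep_one : rep b 1 = 1 := by simp [rep]
  ext k
  rw [Pi.zero_apply]
  rcases (show (k : ℕ) = 0 ∨ (k : ℕ) = 1 ∨ 2 ≤ (k : ℕ) by omega) with hk | hk | hk
  · calc v k = ∑ j : Fin n, (1 - (rep b (j : ℕ) : ℤ)) * v j := by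
          rw [Finset.sum_eq_single k]
          · simp [hk, rep]
          · intro j _ hj
            rcases (show (j : ℕ) = 1 ∨ 2 ≤ (j : ℕ) by omega) with hj1 | hj2
            · simp [hj1, rep_one]
            · simp [hsupp j hj2]
          · simp
      _ = 0 := by simp only [sub_mul, one_mul, Finset.sum_sub_distrib, h0, h1, sub_zero]
  · calc v k = ∑ j : Fin n, (rep b (j : ℕ) : ℤ) * v j := by
          rw [Finset.sum_eq_single k]
          · simp [hk, rep_one]
          · intro j _ hj
            rcases (show (j : ℕ) = 0 ∨ 2 ≤ (j : ℕ) by omega) with hj0 | hj2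
            · simp [hj0, rep]
            · simp [hsupp j hj2]
          · simp
      _ = 0 := h0
  · exact hsupp k hk

lemma mem_span_Crows_of_Bmat_mulVec_eq_zero (m : ℕ) {v : Fin n → ℤ}
    (hv : Bmat b n *ᵥ v = 0) (hsupp : ∀ j : Fin n, m + 2 ≤ (j : ℕ) → v j = 0) :
    v ∈ Submodule.span ℤ (Set.range (Crows b n)) := by
  induction m generalizing v with
  | zero => simp [eq_zero_of_Bmat_mulVec_eq_zero hv hsupp]
  | succ m ih =>
    by_cases hm : m + 2 < n
    · set c := v ⟨m + 2, hm⟩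
      have hw : Bmat b n *ᵥ (v - c • recurrenceRow b n m) = 0 := by
        rw [mulVec_sub, mulVec_smul, Bmat_mulVec_recurrenceRow (by omega), hv, smul_zero,
          sub_zero]
      have hw_supp : ∀ j : Fin n, m + 2 ≤ (j : ℕ) → (v - c • recurrenceRow b n m) j = 0 := by
        intro j hj
        rcases hj.eq_or_lt with hj | hj
        · obtain rfl : j = ⟨m + 2, hm⟩ := Fin.ext hj.symm
          simp [recurrenceRow_apply_self (j := ⟨m + 2, hm⟩) rfl, c]
        · simp [recurrenceRow_apply_of_lt hj, hsupp j (by omega)]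
      rw [← sub_add_cancel v (c • recurrenceRow b n m)]
      exact add_mem (ih hw hw_supp)
        (Submodule.smul_mem _ _ (recurrenceRow_mem_span_Crows (by omega)))
    · exact ih hv fun j hj => hsupp j (by omega)

end

theorem stmt10_general (b n : ℕ) :
    Submodule.span ℤ (Set.range (Crows b n)) =
      LinearMap.ker (Matrix.mulVecLin (Bmat b n)) := by
  apply le_antisymm
  · rw [Submodule.span_le]
    rintro _ ⟨r, rfl⟩
    exact Bmat_mulVec_Crows r
  · intro u hu
    exact mem_span_Crows_of_Bmat_mulVec_eq_zero n hu fun j hj => absurd j.isLt (by omega)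

theorem stmt10 (b n : ℕ) (hb : 0 < b) (hn : 3 ≤ n) :
    Submodule.span ℤ (Set.range (Crows b n)) =
      LinearMap.ker (Matrix.mulVecLin (Bmat b n)) :=
  stmt10_general b n
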